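/- arXiv:2110.13108 — 3 statements merged into one kernel-verified Lean document; each statement's English description precedes it below -/
import Mathlib

section
/- Let A be a unital C*-algebra with unit 1, let p and q be projections in A, and let z be an element of the center of A with 0 ≤ z ≤ 1. Set a = (1 − z)p + zq and b = (1 − z)p + z(1 − q). Then |a − b| = z and |1 − a − b| = 1 − z; in particular a is absolutely compatible with b. -/
/-- A projection in a C*-algebra: `p = p* = p²`. -/
def IsProj {A : Type*} [Mul A] [Star A] (p : A) : Prop := star p = p ∧ p * p = p

/-- `|x|`: the positive square root of `star x * x` given by the continuous functional
calculus (for a self-adjoint `x` this is the positive square root of `x²`). -/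
noncomputable def cabs {A : Type*} [CStarAlgebra A] [PartialOrder A] [StarOrderedRing A]
    (x : A) : A := CFC.sqrt (star x * x)

/-- `a` and `b` are absolutely compatible if `|a - b| + |1 - a - b| = 1`. -/
def AbsCompatible {A : Type*} [CStarAlgebra A] [PartialOrder A] [StarOrderedRing A]
    (a b : A) : Prop := cabs (a - b) + cabs (1 - a - b) = 1

/-- for projections `p, q` in a unital C*-algebra and a central element `z` with
`0 ≤ z ≤ 1`, setting `a = (1 - z)p + zq` and `b = (1 - z)p + z(1 - q)`, we have `|a - b| = z`
and `|1 - a - b| = 1 - z`; in particular `a` is absolutely compatible with `b`. -/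
theorem statement1 {A : Type*} [CStarAlgebra A] [PartialOrder A] [StarOrderedRing A]
    {p q z : A} (hp : IsProj p) (hq : IsProj q)
    (hzc : ∀ x : A, z * x = x * z) (hz0 : 0 ≤ z) (hz1 : z ≤ 1) :
    cabs (((1 - z) * p + z * q) - ((1 - z) * p + z * (1 - q))) = z ∧
      cabs (1 - ((1 - z) * p + z * q) - ((1 - z) * p + z * (1 - q))) = 1 - z ∧
      AbsCompatible ((1 - z) * p + z * q) ((1 - z) * p + z * (1 - q)) := by
  have hzs : star z = z := (IsSelfAdjoint.of_nonneg hz0).star_eq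
  have hqs : star q = q := hq.1
  have hps : star p = p := hp.1
  have hqq : q * q = q := hq.2
  have hpp : p * p = p := hp.2
  have key1 : cabs (((1 - z) * p + z * q) - ((1 - z) * p + z * (1 - q))) = z := by
    have e1 : ((1 - z) * p + z * q) - ((1 - z) * p + z * (1 - q)) = z * (2 * q - 1) := by
      noncomm_ring
    rw [e1]
    have hq2 : star (2 * q - 1) = 2 * q - 1 := by
      rw [star_sub, star_one, star_mul, hqs, star_ofNat, two_mul, mul_two]
    have hst : star (z * (2 * q - 1)) = z * (2 * q - 1) := by
      rw [star_mul, hq2, hzs, ← hzc]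
    have e2 : star (z * (2 * q - 1)) * (z * (2 * q - 1)) = z * z := by
      rw [hst]
      rw [show z * (2 * q - 1) * (z * (2 * q - 1)) = z * ((2 * q - 1) * z) * (2 * q - 1)
        from by noncomm_ring, (hzc (2 * q - 1)).symm,
        show z * (z * (2 * q - 1)) * (2 * q - 1) = z * z * ((2 * q - 1) * (2 * q - 1))
        from by noncomm_ring]
      have hsq : (2 * q - 1) * (2 * q - 1) = 1 := by
        have h4 : (2 * q - 1) * (2 * q - 1) = 4 * (q * q) - 4 * q + 1 := by noncomm_ring
        rw [h4, hqq]; noncomm_ring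
      rw [hsq, mul_one]
    rw [cabs, e2, CFC.sqrt_mul_self z hz0]
  have key2 : cabs (1 - ((1 - z) * p + z * q) - ((1 - z) * p + z * (1 - q))) = 1 - z := by
    have e1 : 1 - ((1 - z) * p + z * q) - ((1 - z) * p + z * (1 - q))
        = (1 - z) * (1 - 2 * p) := by
      noncomm_ring
    rw [e1]
    have hwc : ∀ x : A, (1 - z) * x = x * (1 - z) := fun x => by
      rw [sub_mul, mul_sub, one_mul, mul_one, hzc x]
    have hws : star (1 - z) = 1 - z := by rw [star_sub, star_one, hzs]
    have hp2 : star (1 - 2 * p) = 1 - 2 * p := by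
      rw [star_sub, star_one, star_mul, hps, star_ofNat, two_mul, mul_two]
    have hst : star ((1 - z) * (1 - 2 * p)) = (1 - z) * (1 - 2 * p) := by
      rw [star_mul, hp2, hws, ← hwc]
    have e2 : star ((1 - z) * (1 - 2 * p)) * ((1 - z) * (1 - 2 * p))
        = (1 - z) * (1 - z) := by
      rw [hst]
      rw [show (1 - z) * (1 - 2 * p) * ((1 - z) * (1 - 2 * p))
          = (1 - z) * ((1 - 2 * p) * (1 - z)) * (1 - 2 * p) from by noncomm_ring,
        (hwc (1 - 2 * p)).symm,
        show (1 - z) * ((1 - z) * (1 - 2 * p)) * (1 - 2 * p)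
          = (1 - z) * (1 - z) * ((1 - 2 * p) * (1 - 2 * p)) from by noncomm_ring]
      have hsq : (1 - 2 * p) * (1 - 2 * p) = 1 := by
        have h4 : (1 - 2 * p) * (1 - 2 * p) = 4 * (p * p) - 4 * p + 1 := by noncomm_ring
        rw [h4, hpp]; noncomm_ring
      rw [hsq, mul_one]
    rw [cabs, e2, CFC.sqrt_mul_self (1 - z) (by simpa using hz1)]
  exact ⟨key1, key2, by rw [AbsCompatible, key1, key2]; noncomm_ring⟩
end

section
/- Let M₀ be a commutative unital C*-algebra and let Q = [[q₁, q],[q*, q₂]] be a projection in M₂(M₀) such that q₁ + q₂ ≤ 1. Then q₀ := q₁ + q₂ is a projection in M₀ and Q·(q₀ ⊗ I₂) = Q. -/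
/-!
A `2 × 2` idempotent `P` over a commutative ring satisfies Cayley–Hamilton in the form
`(1 - tr P) • P = -(det P) • 1`, so everything reduces to `det P = 0`. Taking traces gives
`tr P (1 - tr P) = -2 det P`, and `det P` is idempotent. If `P` is moreover a projection over a
commutative C⋆-algebra, then `det P = star (det P) * det P ≥ 0`, while `tr P = tr (Pᴴ P) ≥ 0` and
`tr P ≤ 1` make `-2 det P` a product of commuting nonnegative elements, so `det P ≤ 0`.
-/

namespace Matrix

section CommRing

variable {R : Type*} [CommRing R]

theorem mul_self_fin_two_eq_trace_smul_sub_det_smul (A : Matrix (Fin 2) (Fin 2) R) :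
    A * A = A.trace • A - A.det • 1 := by
  ext i j
  fin_cases i <;> fin_cases j <;> simp [trace_fin_two, det_fin_two, mul_apply] <;> ring

variable {P : Matrix (Fin 2) (Fin 2) R}

theorem one_sub_trace_smul_of_isIdempotentElem (hP : IsIdempotentElem P) :
    (1 - P.trace) • P = -P.det • 1 := by
  have h := P.mul_self_fin_two_eq_trace_smul_sub_det_smul
  rw [hP.eq] at h
  rw [sub_smul, one_smul, neg_smul]
  nth_rewrite 1 [h]
  abel

theorem trace_mul_one_sub_trace_of_isIdempotentElem (hP : IsIdempotentElem P) :
    P.trace * (1 - P.trace) = -(2 * P.det) := by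
  have h := congrArg trace (one_sub_trace_smul_of_isIdempotentElem hP)
  simp only [trace_smul, trace_one, Fintype.card_fin, smul_eq_mul] at h
  rw [mul_comm, h]
  push_cast
  ring

theorem det_mul_self_of_isIdempotentElem (hP : IsIdempotentElem P) : P.det * P.det = P.det := by
  rw [← det_mul, hP.eq]

theorem trace_smul_self_of_isIdempotentElem_of_det_eq_zero (hP : IsIdempotentElem P)
    (hdet : P.det = 0) : P.trace • P = P := by
  have h := one_sub_trace_smul_of_isIdempotentElem hP
  rw [hdet, neg_zero, zero_smul, sub_smul, one_smul, sub_eq_zero] at h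
  exact h.symm

theorem isIdempotentElem_trace_of_isIdempotentElem_of_det_eq_zero (hP : IsIdempotentElem P)
    (hdet : P.det = 0) : IsIdempotentElem P.trace := by
  have h := trace_mul_one_sub_trace_of_isIdempotentElem hP
  rw [hdet, mul_zero, neg_zero, mul_one_sub, sub_eq_zero] at h
  exact h.symm

end CommRing

section CStarAlgebra

variable {A : Type*} [CommCStarAlgebra A] [PartialOrder A] [StarOrderedRing A]
  {P : Matrix (Fin 2) (Fin 2) A}

theorem det_eq_zero_of_isStarProjection_of_trace_le_one (hP : IsStarProjection P)
    (htr : P.trace ≤ 1) : P.det = 0 := by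
  have hPH : Pᴴ = P := hP.isSelfAdjoint
  have hdet_nonneg : 0 ≤ P.det := by
    have h := star_mul_self_nonneg P.det
    rwa [← det_conjTranspose, hPH, det_mul_self_of_isIdempotentElem hP.isIdempotentElem] at h
  have htr_nonneg : 0 ≤ P.trace := by
    have h := (posSemidef_conjTranspose_mul_self P).trace_nonneg
    rwa [hPH, hP.isIdempotentElem.eq] at h
  have hprod : 0 ≤ -(2 * P.det) := by
    rw [← trace_mul_one_sub_trace_of_isIdempotentElem hP.isIdempotentElem]
    exact (Commute.all _ _).mul_nonneg htr_nonneg (sub_nonneg.2 htr)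
  refine le_antisymm ?_ hdet_nonneg
  rw [← neg_nonneg]
  calc (0 : A) ≤ -(2 * P.det) + P.det := add_nonneg hprod hdet_nonneg
    _ = -P.det := by ring

end CStarAlgebra

end Matrix

/-- if `Q = [[q₁, q],[q*, q₂]]` is a projection in `M₂(M₀)` over a commutative
unital C*-algebra `M₀` with `q₁ + q₂ ≤ 1`, then `q₀ := q₁ + q₂` is a projection in `M₀` and
`Q (q₀ ⊗ I₂) = Q`. -/
theorem statement10 {M₀ : Type*} [CommCStarAlgebra M₀] [PartialOrder M₀] [StarOrderedRing M₀]
    {q₁ q q₂ : M₀}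
    (hstar : star (!![q₁, q; star q, q₂]) = !![q₁, q; star q, q₂])
    (hidem : !![q₁, q; star q, q₂] * !![q₁, q; star q, q₂] = !![q₁, q; star q, q₂])
    (hle : q₁ + q₂ ≤ 1) :
    (star (q₁ + q₂) = q₁ + q₂ ∧ (q₁ + q₂) * (q₁ + q₂) = q₁ + q₂) ∧
      !![q₁, q; star q, q₂] * !![q₁ + q₂, 0; 0, q₁ + q₂] = !![q₁, q; star q, q₂] := by
  set P := !![q₁, q; star q, q₂]
  have htr : P.trace = q₁ + q₂ := Matrix.trace_fin_two_of _ _ _ _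
  have hP : IsStarProjection P := ⟨hidem, hstar⟩
  have hdet : P.det = 0 := Matrix.det_eq_zero_of_isStarProjection_of_trace_le_one hP (htr ▸ hle)
  have hscalar : !![q₁ + q₂, 0; 0, q₁ + q₂] = (q₁ + q₂) • (1 : Matrix (Fin 2) (Fin 2) M₀) := by
    ext i j
    fin_cases i <;> fin_cases j <;> simp
  refine ⟨⟨?_, ?_⟩, ?_⟩
  · rw [← htr, ← Matrix.trace_conjTranspose, ← Matrix.star_eq_conjTranspose, hstar]
  · rw [← htr]
    exact Matrix.isIdempotentElem_trace_of_isIdempotentElem_of_det_eq_zero hidem hdet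
  · rw [hscalar, Matrix.mul_smul, mul_one, ← htr]
    exact Matrix.trace_smul_self_of_isIdempotentElem_of_det_eq_zero hidem hdet
end

section
/- Work in ℝ³. Let B_d be the sphere centered at c₀ = (1/2, 0, 0) of radius 1/2. Let P, Q ∈ B_d, let P' = 2c₀ − P and Q' = 2c₀ − Q, let λ be a real number with 0 < λ < 1, and set A = (1 − λ)P + λQ, B = (1 − λ)P + λQ', and M = (1 − λ)P + λP'. Then the midpoint of P and M equals the midpoint of A and B, namely c_λ = (1 − λ)P + λc₀, and ‖P − M‖ = ‖A − B‖ = λ. (Thus PM and AB are both diameters of the pivotal Poincaré sphere of index λ with pivot P, the sphere centered at c_λ of radius λ/2.) -/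
/-- for `P, Q` on the Poincaré sphere `B_d` (center `c₀ = (1/2,0,0)`, radius
`1/2`), antipodes `P' = 2c₀ - P`, `Q' = 2c₀ - Q`, `0 < λ < 1`, `A = (1-λ)P + λQ`,
`B = (1-λ)P + λQ'` and `M = (1-λ)P + λP'`: the midpoint of `P` and `M` equals the midpoint
of `A` and `B`, namely `c_λ = (1-λ)P + λc₀`, and `‖P - M‖ = ‖A - B‖ = λ`. -/
theorem statement16
    (c₀ : EuclideanSpace ℝ (Fin 3))
    (hc₀ : c₀ = (WithLp.equiv 2 (Fin 3 → ℝ)).symm ![1 / 2, 0, 0])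
    (P Q : EuclideanSpace ℝ (Fin 3))
    (hP : ‖P - c₀‖ = 1 / 2) (hQ : ‖Q - c₀‖ = 1 / 2)
    (l : ℝ) (hl0 : 0 < l) (hl1 : l < 1)
    (P' Q' A B Mpt : EuclideanSpace ℝ (Fin 3))
    (hP' : P' = (2 : ℝ) • c₀ - P) (hQ' : Q' = (2 : ℝ) • c₀ - Q)
    (hA : A = (1 - l) • P + l • Q) (hB : B = (1 - l) • P + l • Q')
    (hM : Mpt = (1 - l) • P + l • P') :
    midpoint ℝ P Mpt = (1 - l) • P + l • c₀ ∧
      midpoint ℝ A B = (1 - l) • P + l • c₀ ∧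
      ‖P - Mpt‖ = l ∧ ‖A - B‖ = l := by
  subst hP' hQ' hA hB hM
  have hPM : P - ((1 - l) • P + l • ((2 : ℝ) • c₀ - P)) = (2 * l) • (P - c₀) := by
    module
  have hAB : ((1 - l) • P + l • Q) - ((1 - l) • P + l • ((2 : ℝ) • c₀ - Q))
      = (2 * l) • (Q - c₀) := by module
  refine ⟨?_, ?_, ?_, ?_⟩
  · rw [midpoint_eq_smul_add, show (⅟2 : ℝ) = 1/2 by norm_num]; module
  · rw [midpoint_eq_smul_add, show (⅟2 : ℝ) = 1/2 by norm_num]; module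
  · rw [hPM, norm_smul, hP]
    simp [abs_of_pos, hl0]
    ring
  · rw [hAB, norm_smul, hQ]
    simp [abs_of_pos, hl0]
    ring
end
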